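/- Let X = A ∪ B ∪ {1} as above, and let 1 ∈ I ∈ P_*(X) with I' = X∖I satisfy I ⊄ A, I' ⊄ A, I ⊄ B, I' ⊄ B. For the paracell S = {I} with opposite S' = {I'}, one has U_S = {X} − {I', I}, and Fac(U_S) = {A∪{1}} ⊗ {B∪{1}} − {I'∩A, I∩(A∪{1})} ⊗ {I'∩B, I∩(B∪{1})}; in particular Fac(U_S) is not of the form u ⊗ v with u, v each being an alternating chain sum U over paracells built from S by the (·‖1,A), (·‖1,B) construction, since (S‖1,A), (S'‖1,A), (S‖1,B), (S'‖1,B) are all empty. -/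

import Mathlib

/-!
A chain for the opposite paracell `{I'}` has at most two blocks, so `U_S` only sees the
chains `(X)` and `(I', I)`. `Fac` is the linear extension of taking traces on `A ∪ {1}` and
`B ∪ {1}`, and none of these traces is empty, because `1 ∈ I` and `I'` meets both `A` and
`B`. A member `J` of one of the sets `(S‖1,A)`, … would force `I` or `I'` into `A` (resp. `B`),
either as `J` itself or as `A \ J`.
-/

open scoped Classical

namespace GRF

variable {α : Type*} [DecidableEq α]

/-- `J` is a proper (nonempty, not everything) subset of `X`. -/
def IsProperSubset (X J : Finset α) : Prop := J ⊆ X ∧ J ≠ ∅ ∧ J ≠ X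

/-- A proper sequence in `P(X)`: a nonempty list of pairwise disjoint nonempty
subsets of `X` with union `X`. -/
def IsProperSeq (X : Finset α) (c : List (Finset α)) : Prop :=
  c ≠ [] ∧ (∀ J ∈ c, J ≠ ∅) ∧ List.Pairwise (fun I J => I ∩ J = ∅) c ∧
    c.foldr (· ∪ ·) ∅ = X

/-- The product of two sequences: all `A_i ∩ B_j`, ordered first by `j` then by `i`,
with empty intersections deleted. -/
noncomputable def seqMul (a b : List (Finset α)) : List (Finset α) :=
  ((b.map fun B => a.map fun A => A ∩ B).flatten).filter fun J => J ≠ ∅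

/-- The set `S' = {J ⊆ X : X \ J ∈ S}` opposite to `S`. -/
def opp (X : Finset α) (S : Set (Finset α)) : Set (Finset α) :=
  {J | J ⊆ X ∧ X \ J ∈ S}

/-- A paracell associated to `X`. -/
def IsParacell (X : Finset α) (S : Set (Finset α)) : Prop :=
  S.Nonempty ∧ (∀ J ∈ S, IsProperSubset X J) ∧
    ∀ I ∈ S, ∀ J ∈ S, I ∩ J ∈ S ∨ I ∪ J ∈ S

/-- A precell associated to `X`. -/
def IsPrecell (X : Finset α) (S : Set (Finset α)) : Prop :=
  IsParacell X S ∧ ∀ J : Finset α, IsProperSubset X J → J ∈ S ∨ X \ J ∈ S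

/-- A cell associated to `X`: a precell admitting real weights with zero total sum,
positive on all members of the cell. -/
def IsCell (X : Finset α) (S : Set (Finset α)) : Prop :=
  IsPrecell X S ∧ ∃ s : α → ℝ,
    (∑ j ∈ X, s j) = 0 ∧ ∀ J ∈ S, 0 < ∑ j ∈ J, s j

/-- `Y ↓ S` for `S` a paracell associated to `X`. -/
def cellDown (Y X : Finset α) (S : Set (Finset α)) : Set (Finset α) :=
  {J | IsProperSubset (Y ∪ X) J ∧ (J ∩ X = X ∨ J ∩ X ∈ S)}

/-- `Y ↑ S'` for `S'` a paracell associated to `X`. -/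
def cellUp (Y X : Finset α) (S : Set (Finset α)) : Set (Finset α) :=
  {J | IsProperSubset (Y ∪ X) J ∧ (J ∩ X = ∅ ∨ J ∩ X ∈ S)}

/-- `Y ↓ j` for a single index `j`. -/
def ptDown (Y : Finset α) (j : α) : Set (Finset α) :=
  {J | IsProperSubset (insert j Y) J ∧ j ∈ J}

/-- `Y ↑ j` for a single index `j`. -/
def ptUp (Y : Finset α) (j : α) : Set (Finset α) :=
  {J | IsProperSubset (insert j Y) J ∧ j ∉ J}

/-- The underlying vector space of the algebra `A(X)`: formal complex linear
combinations of sequences of subsets. -/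
abbrev AX (α : Type*) [DecidableEq α] : Type _ := (List (Finset α)) →₀ ℂ

/-- The multiplication of `A(X)`, extending `seqMul` bilinearly. -/
noncomputable def amul (x y : AX α) : AX α :=
  x.sum fun a ca => y.sum fun b cb => Finsupp.single (seqMul a b) (ca * cb)

/-- The unit `{X}` of `A(X)`. -/
noncomputable def oneA (X : Finset α) : AX α := Finsupp.single [X] 1

/-- `Î = {I, X \ I}` as an element of `A(X)`. -/
noncomputable def hatI (X I : Finset α) : AX α := Finsupp.single [I, X \ I] 1

/-- Product of a list of elements of `A(X)` (with unit `{X}`). -/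
noncomputable def aprod (X : Finset α) (l : List (AX α)) : AX α :=
  l.foldr amul (oneA X)

/-- A `ν`-chain associated to `S'`: a proper sequence all of whose proper initial
partial unions lie in `S'`. -/
def IsChainFor (X : Finset α) (S' : Set (Finset α)) (c : List (Finset α)) : Prop :=
  IsProperSeq X c ∧
    ∀ r : ℕ, 0 < r → r < c.length → ((c.take r).foldr (· ∪ ·) ∅) ∈ S'

lemma IsProperSeq.nodup {X : Finset α} {c : List (Finset α)}
    (h : IsProperSeq X c) : c.Nodup := by
  obtain ⟨-, hne, hpw, -⟩ := h
  refine List.Pairwise.imp_of_mem ?_ hpw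
  intro a b ha _ hab
  intro h'
  subst h'
  exact hne a ha (by simpa using hab)

/-- `U_S = Σ_ν Σ_{ν-chains for S'} (−1)^{ν−1} {J_1,…,J_ν}`, as a function of the
opposite paracell `S'`. -/
noncomputable def US [Fintype α] (X : Finset α) (S' : Set (Finset α)) : AX α :=
  Finsupp.ofSupportFinite
    (fun c => if IsChainFor X S' c then (-1 : ℂ) ^ (c.length - 1) else 0)
    (Set.Finite.subset
      (List.finite_length_le (Finset α) (Fintype.card (Finset α)))
      (by
        intro c hc
        have h : IsChainFor X S' c := by
          by_contra h
          simp [Function.mem_support, h] at hc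
        exact h.1.nodup.length_le_card))

/-- The underlying vector space of `A(A∪{1}) ⊗ A(B∪{1})`. -/
abbrev AX2 (α : Type*) [DecidableEq α] : Type _ :=
  (List (Finset α) × List (Finset α)) →₀ ℂ

/-- The multiplication of the tensor product algebra. -/
noncomputable def tmul (x y : AX2 α) : AX2 α :=
  x.sum fun a ca => y.sum fun b cb =>
    Finsupp.single (seqMul a.1 b.1, seqMul a.2 b.2) (ca * cb)

/-- The tensor `u ⊗ v` of two elements of `A(A∪{1})` and `A(B∪{1})`. -/
noncomputable def tens (u v : AX α) : AX2 α :=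
  u.sum fun a ca => v.sum fun b cb => Finsupp.single (a, b) (ca * cb)

/-- The pair `(c_A, c_B)` of traces of a sequence `c` on `A∪{1}` and `B∪{1}`,
with empty sets deleted. -/
noncomputable def facSeq (A1 B1 : Finset α) (c : List (Finset α)) :
    List (Finset α) × List (Finset α) :=
  ((c.map fun J => J ∩ A1).filter fun J => J ≠ ∅,
   (c.map fun J => J ∩ B1).filter fun J => J ≠ ∅)

/-- The factorization map `Fac : A(X) → A(A∪{1}) ⊗ A(B∪{1})`. -/
noncomputable def Fac (A1 B1 : Finset α) (x : AX α) : AX2 α :=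
  x.sum fun c cc => Finsupp.single (facSeq A1 B1 c) cc

/-- The paracell `(S‖1,A)` built from opposite paracells `S`, `S'` relative to
`X = A ∪ B ∪ {o}`. -/
def restCell (A : Finset α) (o : α) (S S' : Set (Finset α)) : Set (Finset α) :=
  {J | IsProperSubset (insert o A) J ∧
    ((J ⊆ A ∧ J ∈ S) ∨ (o ∈ J ∧ A \ J ∈ S'))}

lemma IsProperSubset.sdiff {X I : Finset α} (hI : IsProperSubset X I) :
    IsProperSubset X (X \ I) := by
  obtain ⟨hIX, hIne, hInX⟩ := hI
  refine ⟨Finset.sdiff_subset, ?_, ?_⟩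
  · rw [Ne, Finset.sdiff_eq_empty_iff_subset]
    exact fun h => hInX (Finset.Subset.antisymm hIX h)
  · rw [Ne, Finset.sdiff_eq_self_iff_disjoint]
    exact fun h => hIne (h.symm.eq_bot_of_le hIX)

section Chains

variable {X K : Finset α}

lemma isChainFor_singleton_self (hX : X ≠ ∅) (S' : Set (Finset α)) :
    IsChainFor X S' [X] :=
  ⟨⟨List.cons_ne_nil _ _, by simpa using hX, List.pairwise_singleton _ _, by simp⟩,
    fun _ _ hr => by simp at hr; omega⟩

lemma isChainFor_singleton_pair (hK : IsProperSubset X K) :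
    IsChainFor X {K} [K, X \ K] := by
  refine ⟨⟨List.cons_ne_nil _ _, ?_, ?_, ?_⟩, ?_⟩
  · simp only [List.mem_cons, List.not_mem_nil, or_false]
    rintro J (rfl | rfl)
    exacts [hK.2.1, hK.sdiff.2.1]
  · simp [Finset.inter_sdiff_self]
  · simp [Finset.union_sdiff_of_subset hK.1]
  · intro r _ hr
    obtain rfl : r = 1 := by simp at hr; omega
    simp

/-- A chain for `{K}` has at most two blocks: a third one would make the first two
partial unions, both equal to `K`, differ by a nonempty block. -/
lemma IsChainFor.eq_of_singleton {c : List (Finset α)} (h : IsChainFor X {K} c) :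
    c = [X] ∨ c = [K, X \ K] := by
  obtain ⟨⟨hne, hmem, hpw, hun⟩, hch⟩ := h
  match c, hne with
  | [J], _ =>
    left
    simpa using hun
  | [J₁, J₂], _ =>
    right
    have h₁ : J₁ = K := by simpa using hch 1 one_pos (by simp)
    have hdisj : Disjoint J₁ J₂ :=
      Finset.disjoint_iff_inter_eq_empty.mpr ((List.pairwise_cons.mp hpw).1 J₂ (by simp))
    have hun' : J₁ ∪ J₂ = X := by simpa using hun
    rw [← h₁, ← hun', Finset.union_sdiff_cancel_left hdisj]
  | J₁ :: J₂ :: _ :: _, _ =>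
    exfalso
    have h₁ : J₁ = K := by simpa using hch 1 one_pos (by simp)
    have h₂ : J₁ ∪ J₂ = K := by simpa using hch 2 two_pos (by simp)
    have hdisj : Disjoint J₁ J₂ :=
      Finset.disjoint_iff_inter_eq_empty.mpr ((List.pairwise_cons.mp hpw).1 J₂ (by simp))
    refine hmem J₂ (by simp) (hdisj.eq_bot_of_ge ?_)
    rw [h₁, ← h₂]
    exact Finset.subset_union_right

lemma isChainFor_singleton_iff (hK : IsProperSubset X K) {c : List (Finset α)} :
    IsChainFor X {K} c ↔ c = [X] ∨ c = [K, X \ K] := by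
  refine ⟨IsChainFor.eq_of_singleton, ?_⟩
  rintro (rfl | rfl)
  · obtain ⟨hKX, hKne, -⟩ := hK
    exact isChainFor_singleton_self (fun h => hKne (Finset.subset_empty.mp (h ▸ hKX))) _
  · exact isChainFor_singleton_pair hK

end Chains

lemma US_apply [Fintype α] (X : Finset α) (S' : Set (Finset α)) (c : List (Finset α)) :
    US X S' c = if IsChainFor X S' c then (-1 : ℂ) ^ (c.length - 1) else 0 :=
  rfl

lemma US_singleton [Fintype α] {X K : Finset α} (hK : IsProperSubset X K) :
    US X {K} = oneA X - Finsupp.single [K, X \ K] 1 := by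
  have hne : ([X] : List (Finset α)) ≠ [K, X \ K] := by simp
  ext c
  rw [US_apply, Finsupp.sub_apply, oneA, Finsupp.single_apply, Finsupp.single_apply,
    isChainFor_singleton_iff hK]
  by_cases h₁ : c = [X]
  · subst h₁
    simp [hne.symm]
  · by_cases h₂ : c = [K, X \ K]
    · subst h₂
      simp [hne]
    · simp [h₁, h₂, Ne.symm h₁, Ne.symm h₂]

lemma Fac_eq_mapDomain (A1 B1 : Finset α) (x : AX α) :
    Fac A1 B1 x = Finsupp.mapDomain (facSeq A1 B1) x :=
  rfl

lemma facSeq_of_inter_ne_empty {A1 B1 : Finset α} {c : List (Finset α)}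
    (hA1 : ∀ J ∈ c, J ∩ A1 ≠ ∅) (hB1 : ∀ J ∈ c, J ∩ B1 ≠ ∅) :
    facSeq A1 B1 c = (c.map (· ∩ A1), c.map (· ∩ B1)) := by
  simp only [facSeq, Prod.mk.injEq, List.filter_eq_self, List.mem_map]
  constructor
  · rintro _ ⟨J, hJ, rfl⟩
    simpa using hA1 J hJ
  · rintro _ ⟨J, hJ, rfl⟩
    simpa using hB1 J hJ

lemma facSeq_singleton_of_subset {X A1 B1 : Finset α} (hA1 : A1 ⊆ X) (hB1 : B1 ⊆ X)
    (hA1ne : A1 ≠ ∅) (hB1ne : B1 ≠ ∅) : facSeq A1 B1 [X] = ([A1], [B1]) := by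
  simp [facSeq, Finset.inter_eq_right.mpr hA1, Finset.inter_eq_right.mpr hB1, hA1ne, hB1ne]

lemma Finset.inter_ne_empty_of_subset_union {K A B : Finset α} (hK : K ⊆ A ∪ B)
    (hKB : ¬ K ⊆ B) : K ∩ A ≠ ∅ := by
  intro h
  refine hKB fun x hx => (Finset.mem_union.mp (hK hx)).resolve_left fun hxA => ?_
  simpa [h] using Finset.mem_inter.mpr ⟨hx, hxA⟩

lemma facSeq_compl_pair {A B X I : Finset α} {o : α} (hX : X = insert o (A ∪ B)) (hoI : o ∈ I)
    (hI'A : ¬ X \ I ⊆ A) (hI'B : ¬ X \ I ⊆ B) :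
    facSeq (insert o A) (insert o B) [X \ I, I] =
      ([(X \ I) ∩ A, I ∩ insert o A], [(X \ I) ∩ B, I ∩ insert o B]) := by
  have hoI' : o ∉ X \ I := fun h => (Finset.mem_sdiff.mp h).2 hoI
  have hI'AB : X \ I ⊆ A ∪ B := fun x hx =>
    (Finset.mem_insert.mp (hX ▸ (Finset.mem_sdiff.mp hx).1)).resolve_left
      (fun h => hoI' (by rwa [← h]))
  have hI'A' := Finset.inter_ne_empty_of_subset_union hI'AB hI'B
  have hI'B' := Finset.inter_ne_empty_of_subset_union (Finset.union_comm A B ▸ hI'AB) hI'A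
  rw [facSeq_of_inter_ne_empty
      (by simp [Finset.inter_insert_of_notMem hoI', Finset.inter_insert_of_mem hoI, hI'A'])
      (by simp [Finset.inter_insert_of_notMem hoI', Finset.inter_insert_of_mem hoI, hI'B'])]
  simp [Finset.inter_insert_of_notMem hoI']

lemma restCell_singleton_eq_empty {A I K : Finset α} {o : α} (hIA : ¬ I ⊆ A)
    (hKA : ¬ K ⊆ A) : restCell A o {I} {K} = ∅ := by
  refine Set.eq_empty_iff_forall_notMem.mpr fun J hJ => ?_
  obtain ⟨-, ⟨hJA, rfl⟩ | ⟨-, hAJ⟩⟩ := hJ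
  · exact hIA hJA
  · exact hKA (Set.mem_singleton_iff.mp hAJ ▸ Finset.sdiff_subset)

theorem singleton_paracell_Fac_general {α : Type*} [DecidableEq α] [Fintype α]
    (A B : Finset α) (o : α)
    (X : Finset α) (hX : X = insert o (A ∪ B))
    (I : Finset α) (hoI : o ∈ I) (hI : IsProperSubset X I)
    (hIA : ¬ I ⊆ A) (hI'A : ¬ (X \ I) ⊆ A)
    (hIB : ¬ I ⊆ B) (hI'B : ¬ (X \ I) ⊆ B) :
    US X ({X \ I} : Set (Finset α)) =
      oneA X - Finsupp.single [X \ I, I] 1 ∧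
    Fac (insert o A) (insert o B) (US X ({X \ I} : Set (Finset α))) =
      Finsupp.single (([insert o A], [insert o B]) :
          List (Finset α) × List (Finset α)) (1 : ℂ) -
      Finsupp.single (([(X \ I) ∩ A, I ∩ insert o A],
          [(X \ I) ∩ B, I ∩ insert o B]) :
          List (Finset α) × List (Finset α)) (1 : ℂ) ∧
    restCell A o ({I} : Set (Finset α)) ({X \ I} : Set (Finset α)) = ∅ ∧
    restCell A o ({X \ I} : Set (Finset α)) ({I} : Set (Finset α)) = ∅ ∧
    restCell B o ({I} : Set (Finset α)) ({X \ I} : Set (Finset α)) = ∅ ∧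
    restCell B o ({X \ I} : Set (Finset α)) ({I} : Set (Finset α)) = ∅ := by
  have hUS : US X {X \ I} = oneA X - Finsupp.single [X \ I, I] 1 := by
    simpa [Finset.sdiff_sdiff_eq_self hI.1] using US_singleton hI.sdiff
  refine ⟨hUS, ?_, restCell_singleton_eq_empty hIA hI'A, restCell_singleton_eq_empty hI'A hIA,
    restCell_singleton_eq_empty hIB hI'B, restCell_singleton_eq_empty hI'B hIB⟩
  have hfacX : facSeq (insert o A) (insert o B) [X] = ([insert o A], [insert o B]) :=
    facSeq_singleton_of_subset
      (hX ▸ Finset.insert_subset_insert o Finset.subset_union_left)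
      (hX ▸ Finset.insert_subset_insert o Finset.subset_union_right)
      (Finset.insert_ne_empty o A) (Finset.insert_ne_empty o B)
  rw [hUS, Fac_eq_mapDomain, Finsupp.mapDomain_sub, oneA, Finsupp.mapDomain_single,
    Finsupp.mapDomain_single, hfacX, facSeq_compl_pair hX hoI hI'A hI'B]

/-- For the paracell `S = {I}` with `1 ∈ I` and `I, I'` not contained in `A` or `B`:
`U_S = {X} − {I', I}`, its factorization is the indicated difference of tensors, and
the four sets `(S‖1,A)`, `(S'‖1,A)`, `(S‖1,B)`, `(S'‖1,B)` are empty. -/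
theorem singleton_paracell_Fac {α : Type*} [DecidableEq α] [Fintype α]
    (A B : Finset α) (o : α)
    (hA : A.Nonempty) (hB : B.Nonempty) (hAB : Disjoint A B)
    (hoA : o ∉ A) (hoB : o ∉ B)
    (X : Finset α) (hX : X = insert o (A ∪ B))
    (I : Finset α) (hoI : o ∈ I) (hI : IsProperSubset X I)
    (hIA : ¬ I ⊆ A) (hI'A : ¬ (X \ I) ⊆ A)
    (hIB : ¬ I ⊆ B) (hI'B : ¬ (X \ I) ⊆ B) :
    US X ({X \ I} : Set (Finset α)) =
      oneA X - Finsupp.single [X \ I, I] 1 ∧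
    Fac (insert o A) (insert o B) (US X ({X \ I} : Set (Finset α))) =
      Finsupp.single (([insert o A], [insert o B]) :
          List (Finset α) × List (Finset α)) (1 : ℂ) -
      Finsupp.single (([(X \ I) ∩ A, I ∩ insert o A],
          [(X \ I) ∩ B, I ∩ insert o B]) :
          List (Finset α) × List (Finset α)) (1 : ℂ) ∧
    restCell A o ({I} : Set (Finset α)) ({X \ I} : Set (Finset α)) = ∅ ∧
    restCell A o ({X \ I} : Set (Finset α)) ({I} : Set (Finset α)) = ∅ ∧
    restCell B o ({I} : Set (Finset α)) ({X \ I} : Set (Finset α)) = ∅ ∧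
    restCell B o ({X \ I} : Set (Finset α)) ({I} : Set (Finset α)) = ∅ :=
  singleton_paracell_Fac_general A B o X hX I hoI hI hIA hI'A hIB hI'B

end GRF
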